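/- arXiv:1912.03531 — 3 statements merged into one kernel-verified Lean document; each statement's English description precedes it below -/
import Mathlib

section
/- Let ρ ∈ (0,1), Γ ∈ [0,1), and d > 0. If 1/(μ(1−ρ)) > d/λ + 1/(μ(1−ρΓ)) where λ = ρμ for some μ > 0, then ρ²/(1−ρ) > d·(1−ρΓ)/(1−Γ). -/
theorem load_threshold_derivation (ρ Γ d μ l : ℝ)
    (hρ0 : 0 < ρ) (hρ1 : ρ < 1) (hΓ0 : 0 ≤ Γ) (hΓ1 : Γ < 1) (hd : 0 < d)
    (hμ : 0 < μ) (hl : l = ρ * μ)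
    (h : 1 / (μ * (1 - ρ)) > d / l + 1 / (μ * (1 - ρ * Γ))) :
    ρ ^ 2 / (1 - ρ) > d * (1 - ρ * Γ) / (1 - Γ) := by
  subst hl
  have h1 : (0:ℝ) < 1 - ρ := by linarith
  have h2 : (0:ℝ) < 1 - Γ := by linarith
  have h3 : (0:ℝ) < 1 - ρ * Γ := by nlinarith
  rw [gt_iff_lt, div_lt_div_iff₀ h2 h1]
  have h' : d / (ρ * μ) + 1 / (μ * (1 - ρ * Γ)) < 1 / (μ * (1 - ρ)) := h
  rw [div_add_div _ _ (by positivity) (by positivity), div_lt_div_iff₀ (by positivity) (by positivity)] at h'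
  nlinarith [mul_pos hμ h1, mul_pos hρ0 hμ, mul_pos (mul_pos hρ0 hμ) (mul_pos hμ h3), sq_nonneg μ, mul_pos hμ hμ]
end

section
/- Let γ, μ, H be reals with 0 < γ < μ and H ≥ 0. If γ·(1/μ + 1/(μ − γ)) ≥ H, then γ/μ ≥ H/2 + 1 − √((H/2)² + 1). -/
theorem processing_ratio_lower_bound (γ μ H : ℝ)
    (hγ : 0 < γ) (hγμ : γ < μ) (hH : 0 ≤ H)
    (h : γ * (1 / μ + 1 / (μ - γ)) ≥ H) :
    γ / μ ≥ H / 2 + 1 - Real.sqrt ((H / 2) ^ 2 + 1) := by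
  have hμ : 0 < μ := hγ.trans hγμ
  have hd : 0 < μ - γ := by linarith
  have key : H * (μ * (μ - γ)) ≤ γ * (μ - γ) + γ * μ := by
    have h2 : γ * (1 / μ + 1 / (μ - γ)) * (μ * (μ - γ)) = γ * (μ - γ) + γ * μ := by
      field_simp
    calc H * (μ * (μ - γ)) ≤ γ * (1 / μ + 1 / (μ - γ)) * (μ * (μ - γ)) :=
          mul_le_mul_of_nonneg_right h (by positivity)
      _ = γ * (μ - γ) + γ * μ := h2
  have hs : Real.sqrt ((H / 2) ^ 2 + 1) ≥ H / 2 + 1 - γ / μ := by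
    rcases le_or_gt (H / 2 + 1 - γ / μ) 0 with hc | hc
    · exact le_trans hc (Real.sqrt_nonneg _)
    · rw [ge_iff_le, ← Real.sqrt_sq hc.le]
      apply Real.sqrt_le_sqrt
      have hq : H * (1 - γ / μ) ≤ γ / μ * (2 - γ / μ) := by
        rw [← sub_nonneg]
        have e : γ / μ * (2 - γ / μ) - H * (1 - γ / μ) =
            (γ * (μ - γ) + γ * μ - H * (μ * (μ - γ))) / μ ^ 2 := by
          field_simp; ring
        rw [e]
        exact div_nonneg (by linarith) (by positivity)
      nlinarith [hq]
  linarith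
end

section
/- Let P be a substochastic n×n real matrix with spectral radius < 1, β ≥ 0 a vector, and Γ ∈ [0,1). If a nonnegative vector λ satisfies λ = β + Pγ for some vector γ with ΓΛλ ≤ γ ≤ λ componentwise (where ΓΛλ denotes Γ·λ), then (I − ΓP)⁻¹β ≤ λ ≤ (I − P)⁻¹β componentwise. -/
open Matrix

attribute [local instance] Matrix.linftyOpNormedAddCommGroup Matrix.linftyOpNormedRing
  Matrix.linftyOpNormedAlgebra

/-!
Substituting the bounds `Γ • λ ≤ γ ≤ λ` into the traffic equation, and using `P ≥ 0`, gives
`(1 - P) λ ≤ β ≤ (1 - Γ P) λ`; it remains to multiply by the inverses, which are entrywise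
nonnegative. For `1 - Γ P` this is the Neumann series, as `‖Γ P‖∞ ≤ Γ < 1` in the row-sum norm.
For `1 - P` the Neumann series need not converge, but `(1 - s P)⁻¹ ≥ 0` for `s < 1` and, since
`1 - P` is invertible, `(1 - s P)⁻¹ → (1 - P)⁻¹` as `s → 1`.
-/

lemma isUnit_one_sub_of_spectralRadius_lt_one {𝕜 A : Type*} [NormedField 𝕜] [Ring A]
    [Algebra 𝕜 A] {a : A} (h : spectralRadius 𝕜 a < 1) : IsUnit (1 - a) := by
  have := spectrum.mem_resolventSet_iff.mp
    (spectrum.mem_resolventSet_of_spectralRadius_lt (k := (1 : 𝕜)) (by simpa using h))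
  rwa [map_one] at this

lemma norm_smul_lt_one_of_norm_le_one {E : Type*} [SeminormedAddCommGroup E] [NormedSpace ℝ E]
    {s : ℝ} {x : E} (hs0 : 0 ≤ s) (hs1 : s < 1) (hx : ‖x‖ ≤ 1) : ‖s • x‖ < 1 := by
  rw [norm_smul, Real.norm_of_nonneg hs0]
  exact (mul_le_of_le_one_right hs0 hx).trans_lt hs1

namespace Matrix

section Order

variable {ι R : Type*} [Fintype ι]

lemma mulVec_mono [Semiring R] [PartialOrder R] [IsOrderedRing R] {M : Matrix ι ι R}
    (hM : ∀ i j, 0 ≤ M i j) {x y : ι → R} (hxy : x ≤ y) : M *ᵥ x ≤ M *ᵥ y :=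
  fun i => dotProduct_le_dotProduct_of_nonneg_left hxy (hM i)

variable [DecidableEq ι] [CommRing R] [PartialOrder R] [IsOrderedRing R]

lemma le_nonsing_inv_mulVec_of_mulVec_le {A : Matrix ι ι R} (hA : IsUnit A)
    (hinv : ∀ i j, 0 ≤ A⁻¹ i j) {x b : ι → R} (h : A *ᵥ x ≤ b) : x ≤ A⁻¹ *ᵥ b := by
  simpa only [mulVec_mulVec, nonsing_inv_mul _ ((isUnit_iff_isUnit_det A).mp hA), one_mulVec] using
    mulVec_mono hinv h

lemma nonsing_inv_mulVec_le_of_le_mulVec {A : Matrix ι ι R} (hA : IsUnit A)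
    (hinv : ∀ i j, 0 ≤ A⁻¹ i j) {x b : ι → R} (h : b ≤ A *ᵥ x) : A⁻¹ *ᵥ b ≤ x := by
  simpa only [mulVec_mulVec, nonsing_inv_mul _ ((isUnit_iff_isUnit_det A).mp hA), one_mulVec] using
    mulVec_mono hinv h

end Order

variable {ι : Type*} [Fintype ι]

lemma linfty_opNorm_le_one_of_nonneg_of_sum_row_le_one {M : Matrix ι ι ℝ}
    (hM : ∀ i j, 0 ≤ M i j) (hrow : ∀ i, ∑ j, M i j ≤ 1) : ‖M‖ ≤ 1 := by
  rw [linfty_opNorm_def, ← NNReal.coe_one, NNReal.coe_le_coe]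
  refine Finset.sup_le fun i _ => ?_
  rw [← NNReal.coe_le_coe]
  push_cast
  simpa only [coe_nnnorm, Real.norm_of_nonneg (hM i _)] using hrow i

variable [DecidableEq ι]

lemma inv_one_sub_nonneg_of_norm_lt_one {M : Matrix ι ι ℝ} (hM : ∀ i j, 0 ≤ M i j)
    (hnorm : ‖M‖ < 1) (i j : ι) : 0 ≤ (1 - M)⁻¹ i j := by
  rw [nonsing_inv_eq_ringInverse]
  have hsum : HasSum (fun k : ℕ => (M ^ k) i j) (Ring.inverse (1 - M) i j) :=
    Pi.hasSum.mp (Pi.hasSum.mp (hasSum_geom_series_inverse M hnorm) i) j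
  exact hsum.nonneg fun k => pow_apply_nonneg hM k i j

lemma inv_one_sub_nonneg_of_norm_le_one {M : Matrix ι ι ℝ} (hM : ∀ i j, 0 ≤ M i j)
    (hnorm : ‖M‖ ≤ 1) (hunit : IsUnit (1 - M)) (i j : ι) : 0 ≤ (1 - M)⁻¹ i j := by
  rw [nonsing_inv_eq_ringInverse]
  have hcont : ContinuousAt (fun s : ℝ => Ring.inverse (1 - s • M) i j) 1 := by
    have hinv := NormedRing.inverse_continuousAt hunit.unit
    rw [hunit.unit_spec] at hinv
    exact (continuous_apply_apply i j).continuousAt.comp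
      (hinv.comp_of_eq (by fun_prop) (by rw [one_smul]))
  have hlim := hcont.tendsto.mono_left (nhdsWithin_le_nhds (s := Set.Iio 1))
  rw [one_smul] at hlim
  refine ge_of_tendsto hlim ?_
  filter_upwards [Ioo_mem_nhdsLT (show (0 : ℝ) < 1 by norm_num)] with s hs
  rw [← nonsing_inv_eq_ringInverse]
  exact inv_one_sub_nonneg_of_norm_lt_one (fun a b => mul_nonneg hs.1.le (hM a b))
    (norm_smul_lt_one_of_norm_le_one hs.1.le hs.2 hnorm) i j

end Matrix

theorem arrival_rate_interval_general (n : ℕ) (P : Matrix (Fin n) (Fin n) ℝ)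
    (hP : ∀ i j, 0 ≤ P i j) (hrow : ∀ i, ∑ j, P i j ≤ 1)
    (hspec : spectralRadius ℝ P < 1)
    (β : Fin n → ℝ)
    (Γ : ℝ) (hΓ0 : 0 ≤ Γ) (hΓ1 : Γ < 1)
    (l γ : Fin n → ℝ)
    (hγl : Γ • l ≤ γ) (hγu : γ ≤ l)
    (htraffic : l = β + P *ᵥ γ) :
    (1 - Γ • P)⁻¹ *ᵥ β ≤ l ∧ l ≤ (1 - P)⁻¹ *ᵥ β := by
  have hPnorm : ‖P‖ ≤ 1 := linfty_opNorm_le_one_of_nonneg_of_sum_row_le_one hP hrow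
  have hΓP : ∀ i j, 0 ≤ (Γ • P) i j := fun i j => mul_nonneg hΓ0 (hP i j)
  have hΓPnorm : ‖Γ • P‖ < 1 := norm_smul_lt_one_of_norm_le_one hΓ0 hΓ1 hPnorm
  have hunit : IsUnit (1 - P) := isUnit_one_sub_of_spectralRadius_lt_one hspec
  have hupper : (1 - P) *ᵥ l ≤ β :=
    calc (1 - P) *ᵥ l = l - P *ᵥ l := by rw [sub_mulVec, one_mulVec]
      _ ≤ β := sub_le_iff_le_add.mpr (htraffic.trans_le (add_le_add_right (mulVec_mono hP hγu) β))
  have hlower : β ≤ (1 - Γ • P) *ᵥ l :=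
    calc β ≤ l - P *ᵥ (Γ • l) :=
          le_sub_iff_add_le.mpr ((add_le_add_right (mulVec_mono hP hγl) β).trans htraffic.ge)
      _ = (1 - Γ • P) *ᵥ l := by rw [sub_mulVec, one_mulVec, smul_mulVec, mulVec_smul]
  exact ⟨nonsing_inv_mulVec_le_of_le_mulVec (Units.oneSub _ hΓPnorm).isUnit
      (inv_one_sub_nonneg_of_norm_lt_one hΓP hΓPnorm) hlower,
    le_nonsing_inv_mulVec_of_mulVec_le hunit (inv_one_sub_nonneg_of_norm_le_one hP hPnorm hunit)
      hupper⟩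

theorem arrival_rate_interval (n : ℕ) (P : Matrix (Fin n) (Fin n) ℝ)
    (hP : ∀ i j, 0 ≤ P i j) (hrow : ∀ i, ∑ j, P i j ≤ 1)
    (hspec : spectralRadius ℝ P < 1)
    (β : Fin n → ℝ) (hβ : 0 ≤ β)
    (Γ : ℝ) (hΓ0 : 0 ≤ Γ) (hΓ1 : Γ < 1)
    (l γ : Fin n → ℝ) (hlpos : 0 ≤ l)
    (hγl : Γ • l ≤ γ) (hγu : γ ≤ l)
    (htraffic : l = β + P *ᵥ γ) :
    (1 - Γ • P)⁻¹ *ᵥ β ≤ l ∧ l ≤ (1 - P)⁻¹ *ᵥ β :=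
  arrival_rate_interval_general n P hP hrow hspec β Γ hΓ0 hΓ1 l γ hγl hγu htraffic
end
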